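/- Let p^1(x,t) = (e^{−λt}/(c√(λπt³))) · ∑_{k=0}^∞ ((λ/(c²t))(c²t² − x²))^{k+1/2} · (k+1)/Γ(k+3/2) for |x| < ct, with λ, c, t > 0. Then for every even positive integer p, ∫_{−ct}^{ct} x^p · p^1(x,t) dx = (e^{−λt}/√π) · Γ((p+1)/2) · (ct)^p · [E_{1, p/2+1}(λt) − (p/2)·E_{1, p/2+2}(λt)], while for every odd positive integer p the integral equals 0. (These are the p-th moments of the random motion X_1(t).) -/

import Mathlib

/-!
Substituting `x = c t y` writes `p¹(x, t)` as a series in `(λt (1 - y²))^(k + 1/2)`. Integrating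
against `y^p` term by term (dominated convergence on `[-1, 1]`), the substitution `v = y²` turns
each term into the Beta integral `B((p + 1)/2, k + 3/2)`, whose `Γ(k + 3/2)` cancels the one in the
series. What is left is `∑ (k + 1) (λt)^k / Γ(k + p/2 + 2)`, and `k + 1 = (k + p/2 + 1) - p/2`
together with `Γ(s + 1) = s Γ(s)` splits it into `E_{1,p/2+1}(λt) - (p/2) E_{1,p/2+2}(λt)`.
For odd `p` the integrand is odd, since `p¹` is even in `x`.
-/

open MeasureTheory Real

/-- The Mittag-Leffler function `E_{a,b}(x) = ∑_k x^k / Γ(ak + b)`. -/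
noncomputable def mittagLeffler (a b x : ℝ) : ℝ :=
  ∑' k : ℕ, x ^ k / Real.Gamma (a * k + b)

/-- The unconditional density law of the random motion `X_1(t)`. -/
noncomputable def p1 (lam c t x : ℝ) : ℝ :=
  Real.exp (-lam * t) / (c * Real.sqrt (lam * π * t ^ 3)) *
    ∑' k : ℕ, (lam / (c ^ 2 * t) * (c ^ 2 * t ^ 2 - x ^ 2)) ^ ((k : ℝ) + 1 / 2) *
      ((k : ℝ) + 1) / Real.Gamma ((k : ℝ) + 3 / 2)

open Filter

lemma summable_pow_div_Gamma_add (x : ℝ) {b : ℝ} (hb : 0 < b) :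
    Summable fun k : ℕ => x ^ k / Gamma (k + b) := by
  refine summable_of_ratio_norm_eventually_le (r := 1 / 2) (by norm_num) ?_
  filter_upwards [eventually_ge_atTop ⌈2 * |x|⌉₊] with n hn
  have hnb : 0 < (n : ℝ) + b := by positivity
  have hx : 2 * |x| ≤ n + b := by linarith [Nat.ceil_le.mp hn]
  have hG : Gamma ((n + 1 : ℕ) + b) = (n + b) * Gamma (n + b) := by
    rw [Nat.cast_succ, add_right_comm, Gamma_add_one hnb.ne']
  have hGpos := Gamma_pos_of_pos hnb
  rw [hG, norm_div, norm_div, norm_mul, pow_succ, norm_mul, Real.norm_of_nonneg hnb.le,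
    Real.norm_of_nonneg hGpos.le, Real.norm_eq_abs x]
  calc ‖x ^ n‖ * |x| / ((n + b) * Gamma (n + b))
      = |x| / (n + b) * (‖x ^ n‖ / Gamma (n + b)) := by rw [div_mul_div_comm, mul_comm |x|]
    _ ≤ 1 / 2 * (‖x ^ n‖ / Gamma (n + b)) := by
      refine mul_le_mul_of_nonneg_right ?_ (by positivity)
      rw [div_le_iff₀ hnb]
      linarith

lemma add_one_div_Gamma_add_one {x b : ℝ} (h : x + b ≠ 0) :
    (x + 1) / Gamma (x + b + 1) = 1 / Gamma (x + b) - (b - 1) / Gamma (x + b + 1) := by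
  have hsplit : (x + 1) / (x + b) = 1 - (b - 1) / (x + b) := by field_simp; ring
  rw [Gamma_add_one h, ← div_div, hsplit, sub_div, div_div]

lemma mittagLeffler_one (b x : ℝ) :
    mittagLeffler 1 b x = ∑' k : ℕ, x ^ k / Gamma (k + b) := by
  simp [mittagLeffler]

lemma hasSum_add_one_mul_pow_div_Gamma (x : ℝ) {b : ℝ} (hb : 0 < b) :
    HasSum (fun k : ℕ => (k + 1) * x ^ k / Gamma (k + b + 1))
      (mittagLeffler 1 b x - (b - 1) * mittagLeffler 1 (b + 1) x) := by
  have hterm (k : ℕ) : (k + 1) * x ^ k / Gamma (k + b + 1) =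
      x ^ k / Gamma (k + b) - (b - 1) * (x ^ k / Gamma (k + (b + 1))) := by
    rw [mul_comm, mul_div_assoc, add_one_div_Gamma_add_one (by positivity), ← add_assoc]
    ring
  rw [funext hterm, mittagLeffler_one, mittagLeffler_one, ← tsum_mul_left]
  exact (summable_pow_div_Gamma_add x hb).hasSum.sub
    ((summable_pow_div_Gamma_add x (by positivity)).mul_left _).hasSum

section Symmetric

variable {f : ℝ → ℝ}

lemma Function.Odd.intervalIntegral_neg_eq_zero (hf : f.Odd) (a : ℝ) :
    ∫ x in -a..a, f x = 0 := by
  have h := intervalIntegral.integral_comp_neg (a := -a) (b := a) f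
  simp only [hf.eq, neg_neg, intervalIntegral.integral_neg] at h
  linarith

lemma Function.Even.intervalIntegral_neg_eq_two_mul (hf : f.Even) {a : ℝ}
    (hfi : IntervalIntegrable f volume (-a) a) :
    ∫ x in -a..a, f x = 2 * ∫ x in 0..a, f x := by
  have hleft : ∫ x in -a..0, f x = ∫ x in 0..a, f x := by
    simpa [hf.eq] using (intervalIntegral.integral_comp_neg (a := 0) (b := a) f).symm
  have h0 : (0 : ℝ) ∈ Set.uIcc (-a) a := by
    rcases le_total 0 a with h | h <;> simp [h]
  rw [← intervalIntegral.integral_add_adjacent_intervals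
    (hfi.mono_set (Set.uIcc_subset_uIcc_left h0)) (hfi.mono_set (Set.uIcc_subset_uIcc_right h0)),
    hleft, two_mul]

end Symmetric

lemma integral_rpow_mul_one_sub_rpow {a b : ℝ} (ha : 0 < a) (hb : 0 < b) :
    ∫ x in (0 : ℝ)..1, x ^ (a - 1) * (1 - x) ^ (b - 1) = Gamma a * Gamma b / Gamma (a + b) := by
  have h := Complex.betaIntegral_eq_Gamma_mul_div a b (by simpa) (by simpa)
  rw [Complex.betaIntegral, ← Complex.ofReal_add, Complex.Gamma_ofReal, Complex.Gamma_ofReal,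
    Complex.Gamma_ofReal] at h
  norm_cast at h
  rw [← Complex.ofReal_inj, ← h, ← intervalIntegral.integral_ofReal]
  refine intervalIntegral.integral_congr fun x hx => ?_
  rw [Set.uIcc_of_le zero_le_one] at hx
  push_cast
  rw [Complex.ofReal_cpow hx.1, Complex.ofReal_cpow (by linarith [hx.2])]
  push_cast
  ring

lemma integral_pow_mul_comp_div (f : ℝ → ℝ) (p : ℕ) {A : ℝ} (hA : A ≠ 0) :
    ∫ x in -A..A, x ^ p * f (x / A) = A ^ (p + 1) * ∫ y in (-1)..1, y ^ p * f y := by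
  have h (x : ℝ) : x ^ p * f (x / A) = A ^ p * ((x / A) ^ p * f (x / A)) := by
    rw [div_pow]; field_simp
  simp_rw [h, intervalIntegral.integral_const_mul,
    intervalIntegral.integral_comp_div (fun y => y ^ p * f y) hA, neg_div, div_self hA, smul_eq_mul]
  ring

lemma integral_zero_one_pow_mul_one_sub_sq_rpow {p : ℕ} (hp : p ≠ 0) {r : ℝ} (hr : 0 ≤ r) :
    ∫ y in (0 : ℝ)..1, y ^ p * (1 - y ^ 2) ^ r =
      Gamma ((p + 1) / 2) * Gamma (r + 1) / Gamma ((p + 1) / 2 + (r + 1)) / 2 := by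
  -- the Beta integrand for `a = (p + 1)/2`, `b = r + 1`, halved
  set g : ℝ → ℝ := fun v => v ^ (((p : ℝ) + 1) / 2 - 1) * (1 - v) ^ (r + 1 - 1) / 2
  have hexp : 0 ≤ ((p : ℝ) + 1) / 2 - 1 := by
    have hp1 : (1 : ℝ) ≤ p := by exact_mod_cast Nat.one_le_iff_ne_zero.mpr hp
    linarith
  have hg : Continuous g :=
    ((continuous_id.rpow_const fun _ => Or.inr hexp).mul
      ((continuous_const.sub continuous_id).rpow_const fun _ => Or.inr (by linarith))).div_const _
  have hsubst := intervalIntegral.integral_comp_mul_deriv (a := 0) (b := 1) (f := fun y => y ^ 2)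
    (f' := fun y => 2 * y) (fun y _ => by simpa using hasDerivAt_pow 2 y)
    (continuous_const.mul continuous_id).continuousOn hg
  rw [intervalIntegral.integral_div, one_pow, zero_pow two_ne_zero,
    integral_rpow_mul_one_sub_rpow (by positivity) (by positivity)] at hsubst
  rw [← hsubst]
  refine intervalIntegral.integral_congr fun y hy => ?_
  rw [Set.uIcc_of_le zero_le_one] at hy
  obtain ⟨k, rfl⟩ := Nat.exists_eq_add_one_of_ne_zero hp
  have hpow : (y ^ 2) ^ ((((k + 1 : ℕ) : ℝ) + 1) / 2 - 1) = y ^ k := by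
    rw [← Real.rpow_natCast_mul hy.1, ← Real.rpow_natCast]
    congr 1
    push_cast
    ring
  simp only [g, Function.comp, hpow, add_sub_cancel_right]
  ring

lemma continuous_pow_mul_one_sub_sq_rpow (p : ℕ) {r : ℝ} (hr : 0 ≤ r) :
    Continuous fun y : ℝ => y ^ p * (1 - y ^ 2) ^ r :=
  (continuous_pow p).mul ((continuous_const.sub (continuous_pow 2)).rpow_const fun _ => Or.inr hr)

lemma integral_pow_mul_one_sub_sq_rpow {p : ℕ} (hp : Even p) (hp0 : p ≠ 0) {r : ℝ}
    (hr : 0 ≤ r) :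
    ∫ y in (-1 : ℝ)..1, y ^ p * (1 - y ^ 2) ^ r =
      Gamma ((p + 1) / 2) * Gamma (r + 1) / Gamma ((p + 1) / 2 + (r + 1)) := by
  have heven : (fun y : ℝ => y ^ p * (1 - y ^ 2) ^ r).Even := fun y => by simp [hp.neg_pow]
  rw [heven.intervalIntegral_neg_eq_two_mul
    ((continuous_pow_mul_one_sub_sq_rpow p hr).intervalIntegrable _ _),
    integral_zero_one_pow_mul_one_sub_sq_rpow hp0 hr]
  ring

lemma intervalIntegral.hasSum_integral_of_summable_bound {a b : ℝ} {F : ℕ → ℝ → ℝ}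
    {M : ℕ → ℝ} (hF : ∀ k, Continuous (F k)) (hM : Summable M)
    (hbound : ∀ k, ∀ x ∈ Set.uIoc a b, ‖F k x‖ ≤ M k) :
    HasSum (fun k => ∫ x in a..b, F k x) (∫ x in a..b, ∑' k, F k x) :=
  intervalIntegral.hasSum_integral_of_dominated_convergence (fun k _ => M k)
    (fun k => (hF k).aestronglyMeasurable) (fun k => ae_of_all _ (hbound k))
    (ae_of_all _ fun _ _ => hM) intervalIntegrable_const
    (ae_of_all _ fun x hx => (hM.of_norm_bounded fun k => hbound k x hx).hasSum)

noncomputable def p1Profile (z y : ℝ) : ℝ :=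
  ∑' k : ℕ, (z * (1 - y ^ 2)) ^ ((k : ℝ) + 1 / 2) * ((k : ℝ) + 1) /
    Gamma ((k : ℝ) + 3 / 2)

lemma p1_eq_mul_p1Profile {c t : ℝ} (hc : c ≠ 0) (ht : t ≠ 0) (lam x : ℝ) :
    p1 lam c t x =
      exp (-lam * t) / (c * √(lam * π * t ^ 3)) * p1Profile (lam * t) (x / (c * t)) := by
  have h : lam / (c ^ 2 * t) * (c ^ 2 * t ^ 2 - x ^ 2) = lam * t * (1 - (x / (c * t)) ^ 2) := by
    field_simp
  rw [p1, p1Profile, h]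

lemma hasSum_integral_pow_mul_p1Profile {z : ℝ} (hz : 0 ≤ z) {p : ℕ} (hp : Even p)
    (hp0 : p ≠ 0) :
    HasSum
      (fun k : ℕ => √z * Gamma ((p + 1) / 2) * ((k + 1) * z ^ k / Gamma (k + (p / 2 + 1) + 1)))
      (∫ y in (-1 : ℝ)..1, y ^ p * p1Profile z y) := by
  set F : ℕ → ℝ → ℝ := fun k y =>
    y ^ p * ((z * (1 - y ^ 2)) ^ ((k : ℝ) + 1 / 2) * ((k : ℝ) + 1) / Gamma ((k : ℝ) + 3 / 2))
  have hGamma (k : ℕ) : 0 < Gamma ((k : ℝ) + 3 / 2) := Gamma_pos_of_pos (by positivity)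
  have hz_rpow (k : ℕ) : z ^ ((k : ℝ) + 1 / 2) = √z * z ^ k := by
    rw [rpow_add' hz (by positivity), rpow_natCast, sqrt_eq_rpow, mul_comm]
  have hF (k : ℕ) : Continuous (F k) :=
    (continuous_pow p).mul ((((continuous_const.mul (continuous_const.sub (continuous_pow 2))
      ).rpow_const fun _ => Or.inr (by positivity)).mul continuous_const).div_const _)
  have hbound (k : ℕ) (y : ℝ) (hy : y ∈ Set.uIoc (-1 : ℝ) 1) :
      ‖F k y‖ ≤ √z * ((k + 1) * z ^ k / Gamma (k + 1 / 2 + 1)) := by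
    rw [Set.uIoc_of_le (by norm_num)] at hy
    have hy1 : |y| ≤ 1 := abs_le.mpr ⟨hy.1.le, hy.2⟩
    have hy2 : 0 ≤ 1 - y ^ 2 := by nlinarith [sq_abs y, abs_nonneg y]
    have hpow : (z * (1 - y ^ 2)) ^ ((k : ℝ) + 1 / 2) ≤ z ^ ((k : ℝ) + 1 / 2) :=
      rpow_le_rpow (by positivity) (by nlinarith) (by positivity)
    have hGk := hGamma k
    rw [norm_mul, norm_pow, Real.norm_eq_abs, Real.norm_of_nonneg (by positivity)]
    calc
      |y| ^ p * ((z * (1 - y ^ 2)) ^ ((k : ℝ) + 1 / 2) * ((k : ℝ) + 1) /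
          Gamma ((k : ℝ) + 3 / 2))
        ≤ 1 * (z ^ ((k : ℝ) + 1 / 2) * ((k : ℝ) + 1) / Gamma ((k : ℝ) + 3 / 2)) := by
          gcongr
          exact pow_le_one₀ (abs_nonneg y) hy1
      _ = √z * ((k + 1) * z ^ k / Gamma (k + 1 / 2 + 1)) := by
          rw [hz_rpow, show (k : ℝ) + 1 / 2 + 1 = k + 3 / 2 by ring]
          ring
  have hterm (k : ℕ) : ∫ y in (-1 : ℝ)..1, F k y =
      √z * Gamma ((p + 1) / 2) * ((k + 1) * z ^ k / Gamma (k + (p / 2 + 1) + 1)) := by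
    have hsplit : ∫ y in (-1 : ℝ)..1, F k y =
        z ^ ((k : ℝ) + 1 / 2) * ((k : ℝ) + 1) / Gamma ((k : ℝ) + 3 / 2) *
          ∫ y in (-1 : ℝ)..1, y ^ p * (1 - y ^ 2) ^ ((k : ℝ) + 1 / 2) := by
      rw [← intervalIntegral.integral_const_mul]
      refine intervalIntegral.integral_congr fun y hy => ?_
      rw [Set.uIcc_of_le (by norm_num)] at hy
      have hy2 : 0 ≤ 1 - y ^ 2 := by nlinarith [hy.1, hy.2]
      simp only [F, mul_rpow hz hy2]
      ring
    rw [hsplit, integral_pow_mul_one_sub_sq_rpow hp hp0 (by positivity), hz_rpow,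
      show (k : ℝ) + 1 / 2 + 1 = k + 3 / 2 by ring,
      show ((p : ℝ) + 1) / 2 + (k + 3 / 2) = k + (p / 2 + 1) + 1 by ring]
    have hGk := (hGamma k).ne'
    field_simp
  have hsum := intervalIntegral.hasSum_integral_of_summable_bound hF
    ((hasSum_add_one_mul_pow_div_Gamma z (b := 1 / 2) (by norm_num)).summable.mul_left √z) hbound
  simpa only [hterm, F, tsum_mul_left, p1Profile] using hsum

lemma p1_neg (lam c t x : ℝ) : p1 lam c t (-x) = p1 lam c t x := by
  simp [p1]

/-- The `p`-th moments of the random motion `X_1(t)`: for `p` even positive,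
`∫_{−ct}^{ct} x^p p^1(x,t) dx
  = (e^{−λt}/√π) Γ((p+1)/2) (ct)^p [E_{1,p/2+1}(λt) − (p/2)E_{1,p/2+2}(λt)]`,
while for `p` odd positive the integral vanishes. -/
theorem stmt11 (lam c t : ℝ) (hlam : 0 < lam) (hc : 0 < c) (ht : 0 < t)
    (p : ℕ) (hp : 0 < p) :
    (Even p →
      ∫ x in (-(c * t))..(c * t), x ^ p * p1 lam c t x =
        Real.exp (-lam * t) / Real.sqrt π * Real.Gamma (((p : ℝ) + 1) / 2) * (c * t) ^ p *
          (mittagLeffler 1 ((p : ℝ) / 2 + 1) (lam * t) -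
            (p : ℝ) / 2 * mittagLeffler 1 ((p : ℝ) / 2 + 2) (lam * t))) ∧
    (Odd p → ∫ x in (-(c * t))..(c * t), x ^ p * p1 lam c t x = 0) := by
  refine ⟨fun hpe => ?_, fun hpo => ?_⟩
  · have hmoment : ∫ y in (-1 : ℝ)..1, y ^ p * p1Profile (lam * t) y =
        √(lam * t) * Gamma ((p + 1) / 2) * (mittagLeffler 1 (p / 2 + 1) (lam * t) -
          p / 2 * mittagLeffler 1 (p / 2 + 2) (lam * t)) := by
      rw [← (hasSum_integral_pow_mul_p1Profile (by positivity) hpe hp.ne').tsum_eq, tsum_mul_left,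
        (hasSum_add_one_mul_pow_div_Gamma (lam * t) (b := p / 2 + 1) (by positivity)).tsum_eq,
        add_sub_cancel_right, show (p : ℝ) / 2 + 1 + 1 = p / 2 + 2 by ring]
    have hsqrt : √(lam * π * t ^ 3) = √(lam * t) * √π * t := by
      rw [show lam * π * t ^ 3 = lam * t * π * t ^ 2 by ring, sqrt_mul (by positivity),
        sqrt_mul (by positivity), sqrt_sq ht.le]
    have hsqrt_pos : 0 < √(lam * t) := sqrt_pos.mpr (by positivity)
    simp_rw [p1_eq_mul_p1Profile hc.ne' ht.ne', mul_left_comm _ (exp _ / _),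
      intervalIntegral.integral_const_mul,
      integral_pow_mul_comp_div (p1Profile (lam * t)) p (by positivity : c * t ≠ 0), hmoment,
      hsqrt]
    field_simp
    ring
  · exact Function.Odd.intervalIntegral_neg_eq_zero (fun x => by simp [hpo.neg_pow, p1_neg]) _
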